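/- arXiv:1907.02575 — 3 statements merged into one kernel-verified Lean document; each statement's English description precedes it below -/
import Mathlib

section
/- Let $X$ and $Y$ be independent random vectors in $\mathbb{R}^k$ and $\mathbb{R}^l$ respectively, let $X'$ be an independent copy of $X$ and $Y'$ an independent copy of $Y$ (all mutually independent), and let $f:\mathbb{R}^{k+l}\to\mathbb{R}$ be a measurable function. Then for any $a\in\mathbb{R}$: $\mathbb{P}(f(X,Y)=a)^4 \le \mathbb{P}\big(f(X,Y)-f(X,Y')-f(X',Y)+f(X',Y')=0\big)$. -/
open MeasureTheory ProbabilityTheory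
open scoped ENNReal

/-!
With `μ, ν` the laws of `X, Y` and `s = {f = a}`, independence identifies the left-hand side
with `(μ ⊗ ν)(s)⁴`, and the event that `f(X,Y), f(X,Y'), f(X',Y), f(X',Y')` all equal `a`,
which forces the alternating sum to vanish, with the box
`{(x, x', y, y') | all four corners lie in s}` under `μ ⊗ μ ⊗ ν ⊗ ν`.
Two Cauchy–Schwarz steps, integrating first in `y` and then in `(x, x')`,
bound `(μ ⊗ ν)(s)⁴` by the measure of this box.
-/

theorem sq_lintegral_le_lintegral_sq {α : Type*} [MeasurableSpace α] (μ : Measure α)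
    [IsProbabilityMeasure μ] {g : α → ℝ≥0∞} (hg : AEMeasurable g μ) :
    (∫⁻ x, g x ∂μ) ^ 2 ≤ ∫⁻ x, g x ^ 2 ∂μ := by
  have h := ENNReal.lintegral_mul_le_Lp_mul_Lq μ Real.HolderConjugate.two_two hg
    (aemeasurable_const (b := (1 : ℝ≥0∞)))
  simp only [Pi.mul_apply, mul_one, ENNReal.one_rpow, lintegral_one, measure_univ] at h
  calc (∫⁻ x, g x ∂μ) ^ 2 ≤ ((∫⁻ x, g x ^ (2 : ℝ) ∂μ) ^ (1 / (2 : ℝ))) ^ 2 := by gcongr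
    _ = ∫⁻ x, g x ^ 2 ∂μ := by
      rw [← ENNReal.rpow_natCast _ 2, ← ENNReal.rpow_mul]
      norm_num

section FiberSquare

variable {α β : Type*} [MeasurableSpace α] [MeasurableSpace β]

theorem measure_prod_sq_le_fiberSquare_left (μ : Measure α) (ν : Measure β)
    [IsProbabilityMeasure μ] [SFinite ν] {s : Set (α × β)} (hs : MeasurableSet s) :
    μ.prod ν s ^ 2 ≤ μ.prod (ν.prod ν) {p | (p.1, p.2.1) ∈ s ∧ (p.1, p.2.2) ∈ s} := by
  have ht : MeasurableSet {p : α × β × β | (p.1, p.2.1) ∈ s ∧ (p.1, p.2.2) ∈ s} :=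
    (hs.preimage (by fun_prop)).inter (hs.preimage (by fun_prop))
  rw [Measure.prod_apply hs, Measure.prod_apply ht]
  calc (∫⁻ x, ν (Prod.mk x ⁻¹' s) ∂μ) ^ 2 ≤ ∫⁻ x, ν (Prod.mk x ⁻¹' s) ^ 2 ∂μ :=
        sq_lintegral_le_lintegral_sq μ (measurable_measure_prodMk_left hs).aemeasurable
    _ = _ := by
      congr with x
      rw [sq, ← Measure.prod_prod]
      rfl

theorem measure_prod_sq_le_fiberSquare_right (μ : Measure α) (ν : Measure β)
    [SFinite μ] [IsProbabilityMeasure ν] {s : Set (α × β)} (hs : MeasurableSet s) :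
    μ.prod ν s ^ 2 ≤ (μ.prod μ).prod ν {p | (p.1.1, p.2) ∈ s ∧ (p.1.2, p.2) ∈ s} := by
  have ht : MeasurableSet {p : (α × α) × β | (p.1.1, p.2) ∈ s ∧ (p.1.2, p.2) ∈ s} :=
    (hs.preimage (by fun_prop)).inter (hs.preimage (by fun_prop))
  rw [Measure.prod_apply_symm hs, Measure.prod_apply_symm ht]
  calc (∫⁻ y, μ ((fun x => (x, y)) ⁻¹' s) ∂ν) ^ 2 ≤ ∫⁻ y, μ ((fun x => (x, y)) ⁻¹' s) ^ 2 ∂ν :=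
        sq_lintegral_le_lintegral_sq ν (measurable_measure_prodMk_right hs).aemeasurable
    _ = _ := by
      congr with y
      rw [sq, ← Measure.prod_prod]
      rfl

theorem measure_prod_pow_four_le_box (μ : Measure α) (ν : Measure β)
    [IsProbabilityMeasure μ] [IsProbabilityMeasure ν] {s : Set (α × β)} (hs : MeasurableSet s) :
    μ.prod ν s ^ 4 ≤ (μ.prod μ).prod (ν.prod ν)
      {p | (p.1.1, p.2.1) ∈ s ∧ (p.1.1, p.2.2) ∈ s ∧ (p.1.2, p.2.1) ∈ s ∧ (p.1.2, p.2.2) ∈ s} := by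
  set t : Set ((α × α) × β) := {p | (p.1.1, p.2) ∈ s ∧ (p.1.2, p.2) ∈ s}
  have ht : MeasurableSet t :=
    (hs.preimage (by fun_prop)).inter (hs.preimage (by fun_prop))
  calc μ.prod ν s ^ 4 = (μ.prod ν s ^ 2) ^ 2 := by ring
    _ ≤ ((μ.prod μ).prod ν t) ^ 2 := by gcongr; exact measure_prod_sq_le_fiberSquare_right μ ν hs
    _ ≤ (μ.prod μ).prod (ν.prod ν) {p | (p.1, p.2.1) ∈ t ∧ (p.1, p.2.2) ∈ t} :=
        measure_prod_sq_le_fiberSquare_left _ _ ht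
    _ = _ := by
      congr 1; ext p; simp only [t, Set.mem_ofPred_eq]; tauto

end FiberSquare

section Decoupling

variable {Ω α β : Type*} [MeasurableSpace Ω] [MeasurableSpace α] [MeasurableSpace β]
  {P : Measure Ω} [IsProbabilityMeasure P]

theorem IndepFun.map_prodMk_eq_prod_of_identDistrib {X X' : Ω → α} (hX : Measurable X)
    (hX' : Measurable X') (hXX' : IndepFun X X' P) (hid : IdentDistrib X' X P P) :
    P.map (fun ω => (X ω, X' ω)) = (P.map X).prod (P.map X) := by
  rw [(indepFun_iff_map_prod_eq_prod_map_map hX.aemeasurable hX'.aemeasurable).mp hXX',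
    hid.map_eq]

theorem measure_mem_pow_four_le_measure_box {X X' : Ω → α} {Y Y' : Ω → β}
    (hX : Measurable X) (hX' : Measurable X') (hY : Measurable Y) (hY' : Measurable Y')
    (hXX' : IndepFun X X' P) (hYY' : IndepFun Y Y' P)
    (hpair : IndepFun (fun ω => (X ω, X' ω)) (fun ω => (Y ω, Y' ω)) P)
    (hidX : IdentDistrib X' X P P) (hidY : IdentDistrib Y' Y P P)
    {s : Set (α × β)} (hs : MeasurableSet s) :
    P {ω | (X ω, Y ω) ∈ s} ^ 4 ≤
      P {ω | (X ω, Y ω) ∈ s ∧ (X ω, Y' ω) ∈ s ∧ (X' ω, Y ω) ∈ s ∧ (X' ω, Y' ω) ∈ s} := by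
  have : IsProbabilityMeasure (P.map X) := Measure.isProbabilityMeasure_map hX.aemeasurable
  have : IsProbabilityMeasure (P.map Y) := Measure.isProbabilityMeasure_map hY.aemeasurable
  have hlawXY : P.map (fun ω => (X ω, Y ω)) = (P.map X).prod (P.map Y) :=
    (indepFun_iff_map_prod_eq_prod_map_map hX.aemeasurable hY.aemeasurable).mp
      (hpair.comp measurable_fst measurable_fst)
  have hlaw : P.map (fun ω => ((X ω, X' ω), (Y ω, Y' ω))) =
      ((P.map X).prod (P.map X)).prod ((P.map Y).prod (P.map Y)) := by
    rw [(indepFun_iff_map_prod_eq_prod_map_map (hX.prodMk hX').aemeasurable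
        (hY.prodMk hY').aemeasurable).mp hpair,
      IndepFun.map_prodMk_eq_prod_of_identDistrib hX hX' hXX' hidX,
      IndepFun.map_prodMk_eq_prod_of_identDistrib hY hY' hYY' hidY]
  calc P {ω | (X ω, Y ω) ∈ s} ^ 4 = (P.map X).prod (P.map Y) s ^ 4 := by
        rw [← hlawXY, Measure.map_apply (hX.prodMk hY) hs]; rfl
    _ ≤ ((P.map X).prod (P.map X)).prod ((P.map Y).prod (P.map Y))
          {p | (p.1.1, p.2.1) ∈ s ∧ (p.1.1, p.2.2) ∈ s ∧ (p.1.2, p.2.1) ∈ s ∧ (p.1.2, p.2.2) ∈ s} :=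
        measure_prod_pow_four_le_box _ _ hs
    _ = _ := by
      have hbox : MeasurableSet {p : (α × α) × β × β |
          (p.1.1, p.2.1) ∈ s ∧ (p.1.1, p.2.2) ∈ s ∧ (p.1.2, p.2.1) ∈ s ∧ (p.1.2, p.2.2) ∈ s} :=
        (hs.preimage (by fun_prop)).inter <| (hs.preimage (by fun_prop)).inter <|
          (hs.preimage (by fun_prop)).inter (hs.preimage (by fun_prop))
      rw [← hlaw, Measure.map_apply ((hX.prodMk hX').prodMk (hY.prodMk hY')) hbox]
      rfl

end Decoupling

/-- Decoupling: if `X, X', Y, Y'` are mutually independent random vectors with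
`X' ~ X` and `Y' ~ Y`, and `f` is measurable, then for any `a ∈ ℝ`,
`P(f(X,Y) = a)⁴ ≤ P(f(X,Y) - f(X,Y') - f(X',Y) + f(X',Y') = 0)`. -/
theorem stmt_5 (k l : ℕ)
    (Ω : Type*) [MeasureSpace Ω] [IsProbabilityMeasure (ℙ : Measure Ω)]
    (X X' : Ω → (Fin k → ℝ)) (Y Y' : Ω → (Fin l → ℝ))
    (hX : Measurable X) (hX' : Measurable X') (hY : Measurable Y) (hY' : Measurable Y')
    (f : (Fin k → ℝ) → (Fin l → ℝ) → ℝ)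
    (hf : Measurable (fun q : (Fin k → ℝ) × (Fin l → ℝ) => f q.1 q.2))
    (hXX' : IndepFun X X' ℙ)
    (hYY' : IndepFun Y Y' ℙ)
    (hpair : IndepFun (fun ω => (X ω, X' ω)) (fun ω => (Y ω, Y' ω)) ℙ)
    (hidX : IdentDistrib X' X ℙ ℙ) (hidY : IdentDistrib Y' Y ℙ ℙ) (a : ℝ) :
    (ℙ {ω | f (X ω) (Y ω) = a}).toReal ^ 4 ≤
      (ℙ {ω | f (X ω) (Y ω) - f (X ω) (Y' ω) - f (X' ω) (Y ω) + f (X' ω) (Y' ω) = 0}).toReal := by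
  have hbox := measure_mem_pow_four_le_measure_box hX hX' hY hY' hXX' hYY' hpair hidX hidY
    (hf (measurableSet_singleton a))
  rw [← ENNReal.toReal_pow]
  refine ENNReal.toReal_mono (measure_ne_top _ _) (hbox.trans (measure_mono ?_))
  rintro ω ⟨h₁, h₂, h₃, h₄⟩
  simp only [Set.mem_preimage, Set.mem_singleton_iff] at h₁ h₂ h₃ h₄
  simp only [Set.mem_ofPred_eq, h₁, h₂, h₃, h₄]
  ring
end

section
/- Let $p$ be an odd prime, let $w=(w_1,\dots,w_n)\in\mathbb{F}_p^n$, and let $x_1,\dots,x_n$ be i.i.d. Rademacher random variables (uniform on $\{-1,1\}$). Then for every $r\in\mathbb{F}_p$, $\big|\mathbb{P}\big(\sum_{i=1}^n x_i w_i = r\big) - \tfrac{1}{p}\big| \le \frac{1}{p}\sum_{t\in\mathbb{F}_p\setminus\{0\}} \exp\big(-2\sum_{i=1}^n \|t w_i / p\|_{\mathbb{R}/\mathbb{Z}}^2\big)$, where $w_i$ are identified with integer representatives. -/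
/-!
With `ψ = ZMod.stdAddChar`, orthogonality of characters gives
`P(X = r) - 1/p = (1/p) ∑_{t ≠ 0} ψ(-tr) E[ψ(tX)]` for `X = ∑ xᵢwᵢ`. By independence
`E[ψ(tX)] = ∏ᵢ E[ψ(t xᵢ wᵢ)] = ∏ᵢ cos(2π (twᵢ)/p)`, and `|cos(π u)| ≤ 1 - 2‖u‖² ≤ exp(-2‖u‖²)`
with `‖·‖` the distance to `ℤ`. This bounds the `t`-th term by `exp(-2 ∑ᵢ ‖2twᵢ/p‖²)`;
since `p` is odd, `t ↦ 2t` permutes the nonzero residues, which removes the factor `2`.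
-/

open MeasureTheory ProbabilityTheory Real

lemma AddChar.map_sum_eq_prod {A M : Type*} [AddCommMonoid A] [CommMonoid M] (ψ : AddChar A M)
    {ι : Type*} (s : Finset ι) (f : ι → A) : ψ (∑ i ∈ s, f i) = ∏ i ∈ s, ψ (f i) := by
  classical
  induction s using Finset.induction_on with
  | empty => simp
  | insert a s ha ih =>
    rw [Finset.sum_insert ha, Finset.prod_insert ha, AddChar.map_add_eq_mul, ih]

lemma Real.abs_cos_pi_mul_le_exp (u : ℝ) :
    |cos (π * u)| ≤ exp (-2 * ‖(u : UnitAddCircle)‖ ^ 2) := by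
  set s := u - round u
  have hs : |s| ≤ 1 / 2 := abs_sub_round u
  have hπs : |π * s| ≤ π / 2 := by
    rw [abs_mul, abs_of_pos pi_pos]; nlinarith [pi_pos]
  have hcos : |cos (π * u)| = cos (π * s) := by
    rw [show π * u = π * s + round u * π by ring, cos_add_int_mul_pi, abs_mul, abs_neg_one_zpow,
      one_mul, abs_of_nonneg (cos_nonneg_of_mem_Icc (abs_le.mp hπs))]
  calc |cos (π * u)| = cos (π * s) := hcos
    _ ≤ 1 - 2 / π ^ 2 * (π * s) ^ 2 := cos_le_one_sub_mul_cos_sq (by linarith [pi_pos])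
    _ = -2 * s ^ 2 + 1 := by field_simp; ring
    _ ≤ exp (-2 * s ^ 2) := add_one_le_exp _
    _ = exp (-2 * ‖(u : UnitAddCircle)‖ ^ 2) := by rw [UnitAddCircle.norm_eq, sq_abs]

lemma UnitAddCircle.abs_re_toCircle_le_exp (θ : UnitAddCircle) :
    |(θ.toCircle : ℂ).re| ≤ exp (-2 * ‖2 • θ‖ ^ 2) := by
  induction θ using QuotientAddGroup.induction_on with
  | H y =>
    rw [AddCircle.toCircle_apply_mk, Circle.coe_exp, Complex.exp_ofReal_mul_I_re,
      ← QuotientAddGroup.mk_nsmul, nsmul_eq_mul, Nat.cast_ofNat, div_one, mul_comm 2 π, mul_assoc]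
    exact Real.abs_cos_pi_mul_le_exp (2 * y)

lemma ZMod.abs_re_stdAddChar_le_exp {N : ℕ} [NeZero N] (c : ZMod N) :
    |(ZMod.stdAddChar c).re| ≤ exp (-2 * ‖ZMod.toAddCircle (2 * c)‖ ^ 2) := by
  rw [two_mul, map_add, ← two_nsmul]
  exact UnitAddCircle.abs_re_toCircle_le_exp _

section Rademacher

variable {Ω : Type*} [MeasurableSpace Ω] {μ : Measure Ω} [IsProbabilityMeasure μ]

lemma map_eq_of_rademacher {X : Ω → ℤ} (hX : Measurable X)
    (h1 : μ {ω | X ω = 1} = 1 / 2) (h2 : μ {ω | X ω = -1} = 1 / 2) :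
    μ.map X = (1 / 2 : ENNReal) • (Measure.dirac 1 + Measure.dirac (-1)) := by
  have hsupp : ∀ᵐ ω ∂μ, X ω = 1 ∨ X ω = -1 := by
    rw [ae_iff_measure_eq (by measurability), Set.ofPred_or,
      measure_union _ (measurableSet_eq_fun hX measurable_const), h1, h2, ENNReal.add_halves,
      measure_univ]
    exact Set.disjoint_left.mpr fun ω h1 h2 => by simp_all
  refine Measure.ext_iff_singleton.mpr fun a => ?_
  rw [Measure.map_apply hX (measurableSet_singleton a)]
  by_cases ha1 : a = 1
  · subst ha1; change μ {ω | X ω = 1} = _; simp [h1]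
  by_cases ha2 : a = -1
  · subst ha2; change μ {ω | X ω = -1} = _; simp [h2]
  have : μ (X ⁻¹' {a}) = 0 := measure_mono_null (fun ω hω => by simp_all) (ae_iff.mp hsupp)
  simp [this, ha1, ha2]

lemma integral_comp_of_rademacher {X : Ω → ℤ} (hX : Measurable X)
    (h1 : μ {ω | X ω = 1} = 1 / 2) (h2 : μ {ω | X ω = -1} = 1 / 2) (f : ℤ → ℂ) :
    ∫ ω, f (X ω) ∂μ = (f 1 + f (-1)) / 2 := by
  rw [← integral_map hX.aemeasurable (measurable_of_countable f).aestronglyMeasurable,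
    map_eq_of_rademacher hX h1 h2, integral_smul_measure,
    integral_add_measure (integrable_dirac (by simp)) (integrable_dirac (by simp)),
    integral_dirac, integral_dirac]
  simp; ring

lemma integral_addChar_sum_mul_rademacher {ι R : Type*} [Fintype ι] [Ring R] (ψ : AddChar R ℂ)
    {x : ι → Ω → ℤ} (hmeas : ∀ i, Measurable (x i)) (hindep : iIndepFun x μ)
    (hrad : ∀ i, μ {ω | x i ω = 1} = 1 / 2 ∧ μ {ω | x i ω = -1} = 1 / 2) (c : ι → R) :
    ∫ ω, ψ (∑ i, (x i ω : R) * c i) ∂μ = ∏ i, (ψ (c i) + ψ (-c i)) / 2 := by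
  simp only [AddChar.map_sum_eq_prod]
  rw [hindep.integral_fun_prod_comp (f := fun i (z : ℤ) => ψ (z * c i))
    (fun i => (hmeas i).aemeasurable) (fun i => Measurable.of_discrete.aestronglyMeasurable)]
  refine Finset.prod_congr rfl fun i _ => ?_
  rw [integral_comp_of_rademacher (hmeas i) (hrad i).1 (hrad i).2 fun z => ψ (z * c i)]
  simp

lemma norm_integral_stdAddChar_sum_mul_rademacher_le {ι : Type*} [Fintype ι] {N : ℕ} [NeZero N]
    {x : ι → Ω → ℤ} (hmeas : ∀ i, Measurable (x i)) (hindep : iIndepFun x μ)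
    (hrad : ∀ i, μ {ω | x i ω = 1} = 1 / 2 ∧ μ {ω | x i ω = -1} = 1 / 2) (c : ι → ZMod N) :
    ‖∫ ω, ZMod.stdAddChar (∑ i, (x i ω : ZMod N) * c i) ∂μ‖ ≤
      exp (-2 * ∑ i, ‖ZMod.toAddCircle (2 * c i)‖ ^ 2) := by
  rw [integral_addChar_sum_mul_rademacher _ hmeas hindep hrad, norm_prod, Finset.mul_sum,
    exp_sum]
  gcongr with i
  rw [AddChar.map_neg_eq_conj, ← Complex.re_eq_add_conj, Complex.norm_real, Real.norm_eq_abs]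
  exact ZMod.abs_re_stdAddChar_le_exp _

end Rademacher

section Fourier

variable {Ω : Type*} [MeasurableSpace Ω] {μ : Measure Ω}
variable {R : Type*} [CommRing R] [Fintype R] [DecidableEq R] [MeasurableSpace R]
  [DiscreteMeasurableSpace R] {ψ : AddChar R ℂ} {X : Ω → R}

lemma measureReal_eq_sum_integral_addChar [IsFiniteMeasure μ] (hψ : ψ.IsPrimitive)
    (hX : Measurable X) (r : R) :
    (μ.real {ω | X ω = r} : ℂ) =
      (Fintype.card R : ℂ)⁻¹ * ∑ t, ψ (-(t * r)) * ∫ ω, ψ (t * X ω) ∂μ := by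
  have hint (t : R) : Integrable (fun ω => ψ (t * (X ω - r))) μ :=
    have hm : Measurable fun y => ψ (t * (y - r)) := .of_discrete
    .of_bound (hm.comp hX).aestronglyMeasurable 1 (.of_forall fun ω => (ψ.norm_apply _).le)
  have horth : (fun ω => ∑ t, ψ (t * (X ω - r))) =
      {ω | X ω = r}.indicator fun _ => (Fintype.card R : ℂ) := by
    ext ω
    simp [AddChar.sum_mulShift _ hψ, sub_eq_zero, Set.indicator]
  have hcard : (Fintype.card R : ℂ) ≠ 0 := Nat.cast_ne_zero.mpr Fintype.card_ne_zero
  calc (μ.real {ω | X ω = r} : ℂ)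
      = (Fintype.card R : ℂ)⁻¹ * ∫ ω, ∑ t, ψ (t * (X ω - r)) ∂μ := by
        rw [horth, integral_indicator_const _ (measurableSet_eq_fun hX measurable_const),
          Complex.real_smul, mul_comm, mul_inv_cancel_right₀ hcard]
    _ = (Fintype.card R : ℂ)⁻¹ * ∑ t, ψ (-(t * r)) * ∫ ω, ψ (t * X ω) ∂μ := by
        rw [integral_finsetSum _ fun t _ => hint t]
        congr 1
        refine Finset.sum_congr rfl fun t _ => ?_
        rw [← integral_const_mul]
        simp only [← AddChar.map_add_eq_mul, mul_sub, neg_add_eq_sub]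

lemma abs_measureReal_sub_inv_card_le [IsProbabilityMeasure μ] (hψ : ψ.IsPrimitive)
    (hX : Measurable X) (r : R) :
    |μ.real {ω | X ω = r} - (Fintype.card R : ℝ)⁻¹| ≤
      (Fintype.card R : ℝ)⁻¹ * ∑ t ∈ Finset.univ.filter (· ≠ 0), ‖∫ ω, ψ (t * X ω) ∂μ‖ := by
  have hsplit := Finset.add_sum_erase Finset.univ
    (fun t => ψ (-(t * r)) * ∫ ω, ψ (t * X ω) ∂μ) (Finset.mem_univ 0)
  simp only [zero_mul, neg_zero, AddChar.map_zero_eq_one, integral_const, probReal_univ,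
    one_smul, one_mul] at hsplit
  have hdev : ((μ.real {ω | X ω = r} - (Fintype.card R : ℝ)⁻¹ : ℝ) : ℂ) =
      (Fintype.card R : ℂ)⁻¹ * ∑ t ∈ Finset.univ.erase 0, ψ (-(t * r)) * ∫ ω, ψ (t * X ω) ∂μ := by
    rw [Complex.ofReal_sub, measureReal_eq_sum_integral_addChar hψ hX, ← hsplit]
    push_cast
    ring
  rw [← Real.norm_eq_abs, ← Complex.norm_real, hdev, norm_mul, Finset.filter_ne']
  gcongr
  · simp
  refine (norm_sum_le _ _).trans_eq (Finset.sum_congr rfl fun t _ => ?_)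
  rw [norm_mul, ψ.norm_apply, one_mul]

end Fourier

lemma Finset.sum_filter_ne_zero_comp_mul_left {G₀ M : Type*} [GroupWithZero G₀] [Fintype G₀]
    [DecidableEq G₀] [AddCommMonoid M] {a : G₀} (ha : a ≠ 0) (f : G₀ → M) :
    ∑ t ∈ univ.filter (· ≠ 0), f (a * t) = ∑ t ∈ univ.filter (· ≠ 0), f t := by
  simp only [Finset.sum_filter]
  exact Fintype.sum_equiv (Equiv.mulLeft₀ a ha) _ _ fun t => by simp [ha]

/-- Fourier bound: for an odd prime `p`, `w ∈ 𝔽_pⁿ` and i.i.d. Rademacher `x₁,…,xₙ`,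
for every `r ∈ 𝔽_p`,
`|P(∑ xᵢwᵢ = r) - 1/p| ≤ (1/p) ∑_{t ≠ 0} exp(-2 ∑ᵢ ‖t wᵢ / p‖²_{ℝ/ℤ})`. -/
theorem stmt_9 (p : ℕ) [Fact p.Prime] (hodd : p ≠ 2) (n : ℕ)
    (Ω : Type*) [MeasureSpace Ω] [IsProbabilityMeasure (ℙ : Measure Ω)]
    (w : Fin n → ZMod p) (x : Fin n → Ω → ℤ)
    (hmeas : ∀ i, Measurable (x i))
    (hindep : iIndepFun x ℙ)
    (hrad : ∀ i, ℙ {ω | x i ω = 1} = 1 / 2 ∧ ℙ {ω | x i ω = -1} = 1 / 2)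
    (r : ZMod p) :
    |(ℙ {ω | ∑ i, (x i ω : ZMod p) * w i = r}).toReal - 1 / p| ≤
      (1 / p) * ∑ t ∈ Finset.univ.filter (fun t : ZMod p => t ≠ 0),
        Real.exp (-2 * ∑ i, |((t * w i).val : ℝ) / p -
          (round (((t * w i).val : ℝ) / p) : ℝ)| ^ 2) := by
  have h2 : (2 : ZMod p) ≠ 0 := Ring.two_ne_zero (by rwa [ZMod.ringChar_zmod_n])
  have hX : Measurable fun ω => ∑ i, (x i ω : ZMod p) * w i := by fun_prop
  calc |(ℙ {ω | ∑ i, (x i ω : ZMod p) * w i = r}).toReal - 1 / p|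
      ≤ (p : ℝ)⁻¹ * ∑ t ∈ Finset.univ.filter (· ≠ 0),
          ‖∫ ω, ZMod.stdAddChar (N := p) (t * ∑ i, (x i ω : ZMod p) * w i)‖ := by
        simpa [measureReal_def] using
          abs_measureReal_sub_inv_card_le (ZMod.isPrimitive_stdAddChar p) hX r
    _ ≤ (p : ℝ)⁻¹ * ∑ t ∈ Finset.univ.filter (· ≠ 0),
          exp (-2 * ∑ i, ‖ZMod.toAddCircle (2 * t * w i)‖ ^ 2) := by
        gcongr with t
        simp only [Finset.mul_sum _ _ t, mul_left_comm t, mul_assoc]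
        exact norm_integral_stdAddChar_sum_mul_rademacher_le hmeas hindep hrad fun i => t * w i
    _ = (p : ℝ)⁻¹ * ∑ t ∈ Finset.univ.filter (· ≠ 0),
          exp (-2 * ∑ i, ‖ZMod.toAddCircle (t * w i)‖ ^ 2) := by
        rw [Finset.sum_filter_ne_zero_comp_mul_left h2
          fun t => exp (-2 * ∑ i, ‖ZMod.toAddCircle (t * w i)‖ ^ 2)]
    _ = _ := by simp [ZMod.toAddCircle_apply, UnitAddCircle.norm_eq]
end

section
/- Let $Q = \{x_1 a_1 + \cdots + x_r a_r : |x_i| \le N_i\}$ be a 2-proper symmetric generalized arithmetic progression in an abelian group $G$ (i.e., the map $(x_1,\dots,x_r)\mapsto \sum_i x_i a_i$ on $\{|x_i|\le 2N_i\}$ is injective). Let $X \subseteq G$ with $0 \in X$ and suppose the $k$-fold sumset $kX$ is contained in $Q$. Then $X \subseteq \{\sum_{i=1}^r x_i a_i : |x_i| \le 2N_i/k\}$. -/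
/-- Dividing trick: let `Q = {∑ xᵢaᵢ : |xᵢ| ≤ Nᵢ}` be a 2-proper symmetric GAP in an
abelian group `G`, let `0 ∈ X ⊆ G`, and suppose the `k`-fold sumset `kX ⊆ Q`. Then
`X ⊆ {∑ xᵢaᵢ : |xᵢ| ≤ 2Nᵢ/k}`. -/
theorem stmt_12 (G : Type*) [AddCommGroup G] (r k : ℕ) (hk : 0 < k)
    (a : Fin r → G) (N : Fin r → ℕ)
    (hproper : ∀ x y : Fin r → ℤ, (∀ i, |x i| ≤ 2 * N i) → (∀ i, |y i| ≤ 2 * N i) →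
      ∑ i, x i • a i = ∑ i, y i • a i → x = y)
    (X : Set G) (h0 : (0 : G) ∈ X)
    (hsub : ∀ f : Fin k → G, (∀ j, f j ∈ X) →
      ∃ x : Fin r → ℤ, (∀ i, |x i| ≤ N i) ∧ ∑ i, x i • a i = ∑ j, f j) :
    ∀ g ∈ X, ∃ x : Fin r → ℤ,
      (∀ i, (|x i| : ℚ) ≤ 2 * N i / k) ∧ ∑ i, x i • a i = g := by
  intro g hg
  have key : ∀ m : ℕ, m ≤ k → ∃ x : Fin r → ℤ,
      (∀ i, |x i| ≤ N i) ∧ ∑ i, x i • a i = m • g := by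
    intro m hm
    obtain ⟨x, hx, hsum⟩ := hsub (fun j => if (j : ℕ) < m then g else 0)
      (fun j => by by_cases h : (j : ℕ) < m <;> simp [h, hg, h0])
    refine ⟨x, hx, ?_⟩
    rw [hsum, Finset.sum_ite, Finset.sum_const, Finset.sum_const_zero, add_zero]
    congr 1
    have : (Finset.univ.filter (fun j : Fin k => (j : ℕ) < m)) =
        (Finset.range m).attachFin (fun x hx => lt_of_lt_of_le (Finset.mem_range.mp hx) hm) := by
      ext j
      simp [Finset.mem_attachFin]
    rw [this, Finset.card_attachFin, Finset.card_range]
  obtain ⟨x1, hx1, hs1⟩ := key 1 hk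
  have hN2 : ∀ y : Fin r → ℤ, (∀ i, |y i| ≤ N i) → ∀ i, |y i| ≤ 2 * N i := by
    intro y hy i
    have : (0 : ℤ) ≤ N i := Int.natCast_nonneg _
    linarith [hy i]
  have uniq : ∀ m : ℕ, m ≤ k → ∀ y : Fin r → ℤ, (∀ i, |y i| ≤ N i) →
      ∑ i, y i • a i = m • g → y = m • x1 := by
    intro m
    induction m with
    | zero =>
      intro _ y hy hsum
      have h0sum : ∑ i, (0 : Fin r → ℤ) i • a i = (0 : ℕ) • g := by simp
      have := hproper y 0 (hN2 y hy) (by intro i; simp) (by rw [hsum, h0sum])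
      simpa using this
    | succ m ih =>
      intro hm y hy hsum
      obtain ⟨ym, hym, hsm⟩ := key m (le_of_lt (Nat.lt_of_succ_le hm))
      have hym1 : ym = m • x1 := ih (le_of_lt (Nat.lt_of_succ_le hm)) ym hym hsm
      have hb : ∀ i, |(ym + x1) i| ≤ 2 * N i := by
        intro i
        have := abs_add_le (ym i) (x1 i)
        have h1 := hym i
        have h2 := hx1 i
        simp only [Pi.add_apply]
        omega
      have hssum : ∑ i, (ym + x1) i • a i = ∑ i, y i • a i := by
        have hsplit : ∑ i, (ym + x1) i • a i = (∑ i, ym i • a i) + ∑ i, x1 i • a i := by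
          rw [← Finset.sum_add_distrib]
          exact Finset.sum_congr rfl (fun i _ => by simp [add_smul])
        rw [hsplit, hsm, hs1, hsum]; simp [succ_nsmul]
      have := hproper y (ym + x1) (hN2 y hy) hb hssum.symm
      rw [this, hym1, succ_nsmul]
  obtain ⟨xk, hxk, hsk⟩ := key k le_rfl
  have hxk1 : xk = k • x1 := uniq k le_rfl xk hxk hsk
  refine ⟨x1, ?_, by simpa using hs1⟩
  intro i
  have hb : (k : ℤ) * |x1 i| ≤ N i := by
    have h := hxk i
    rw [hxk1] at h
    simp only [Pi.smul_apply] at h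
    rwa [nsmul_eq_mul, abs_mul, Int.abs_natCast] at h
  have hbq : (k : ℚ) * |x1 i| ≤ N i := by exact_mod_cast hb
  rw [le_div_iff₀ (by positivity : (0:ℚ) < (k:ℚ))]
  push_cast at hbq ⊢
  have hN : (0:ℚ) ≤ N i := by positivity
  nlinarith
end
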